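/- Let (P, A_1,…,A_n) be a regular poset of width w. If a subset L ⊆ P induces a canonical m-ladder in (P, A_1,…,A_n), then m ≤ w. -/

import Mathlib

/-!
Every comparable pair `x ≤ y` between `⊑`-ordered antichains of a regular poset lies in a
bijection of the two antichains moving every element up: split the pair through the
`⊑`-neighbours of the presentation (R5) and compose the matchings of the cores (R4).
For a rung `x_i ≤ y_i` of the ladder this gives such a bijection
`M_i : A(x_i) → A(x_{i+1})` with `y_i ≤ M_i x_i`. Pull each `x_j` back to `p_j ∈ A(x_1)`
along `M_{j-1} ∘ ⋯ ∘ M_1`. If `p_i = p_j` with `i < j`, following the orbit of this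
point gives `y_i ≤ M_i x_i ≤ ⋯ ≤ x_j`, which a ladder forbids; so `m ≤ |A(x_1)| = w`.
-/


/-- `S` is an antichain with respect to the order relation `le`. -/
def IsAntichainOn {α : Type*} (le : α → α → Prop) (S : Finset α) : Prop :=
  ∀ a ∈ S, ∀ b ∈ S, a ≠ b → ¬ le a b ∧ ¬ le b a

/-- The poset `(α, le)` has width `w`: there is an antichain of size `w`
and every antichain has size at most `w`. -/
def IsWidth {α : Type*} (le : α → α → Prop) (w : ℕ) : Prop :=
  (∃ S : Finset α, IsAntichainOn le S ∧ S.card = w) ∧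
    ∀ S : Finset α, IsAntichainOn le S → S.card ≤ w

/-- `g` is an `n`-Grundy coloring of the poset `(α, le)`:
`g` takes values in `{1,…,n}`, is surjective onto `{1,…,n}`,
each color class is a chain (G1), and each vertex of color `j`
has an incomparable witness of every smaller color (G3). -/
def IsGrundy {α : Type*} (le : α → α → Prop) (n : ℕ) (g : α → ℕ) : Prop :=
  (∀ v, 1 ≤ g v ∧ g v ≤ n) ∧
  (∀ i, 1 ≤ i → i ≤ n → ∃ v, g v = i) ∧
  (∀ u v, g u = g v → le u v ∨ le v u) ∧
  (∀ v i, 1 ≤ i → i < g v → ∃ u, (¬ le u v ∧ ¬ le v u) ∧ g u = i)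

/-- `c` is the First-Fit chain partition of the poset `(α, le)` presented in the
strict total order `prec`: every vertex `v` gets the least color `c v ≥ 1` such
that all `prec`-earlier vertices of the same color are comparable to `v`. -/
def IsFFColoring {α : Type*} (le prec : α → α → Prop) (c : α → ℕ) : Prop :=
  ∀ v, 1 ≤ c v ∧
    (∀ u, prec u v → c u = c v → le u v ∨ le v u) ∧
    (∀ j, 1 ≤ j → j < c v → ∃ u, prec u v ∧ c u = j ∧ ¬ le u v ∧ ¬ le v u)

/-- The sequences `x` (lower leg) and `y` (upper leg) form an induced copy of
the `m`-ladder `L_m` in the poset `(α, le)`. -/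
def IsLadderIn {α : Type*} (le : α → α → Prop) {m : ℕ} (x y : Fin m → α) : Prop :=
  (∀ i j : Fin m, i < j → le (x i) (x j) ∧ x i ≠ x j) ∧
  (∀ i j : Fin m, i < j → le (y i) (y j) ∧ y i ≠ y j) ∧
  (∀ i : Fin m, le (x i) (y i) ∧ x i ≠ y i) ∧
  (∀ i j : Fin m, i < j → ¬ le (y i) (x j) ∧ ¬ le (x j) (y i))

/-- The poset `(α, le)` contains no induced copy of the `m`-ladder `L_m`. -/
def LFree {α : Type*} (le : α → α → Prop) (m : ℕ) : Prop :=
  ¬ ∃ x y : Fin m → α, IsLadderIn le x y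

/-- `A ⊑ B`: every element of `A` is `le`-below some element of `B`. -/
def Below {α : Type*} (le : α → α → Prop) (A B : Finset α) : Prop :=
  ∀ a ∈ A, ∃ b ∈ B, le a b

/-- `A ⊏ B`: `A ⊑ B` and `A ≠ B`. -/
def StrictBelow {α : Type*} (le : α → α → Prop) (A B : Finset α) : Prop :=
  Below le A B ∧ A ≠ B

/-- The bipartite poset induced by antichains `A` and `B` (with `A` below `B`)
is a core: `|A| = |B|` and every comparable pair `x ≤ y` with `x ∈ A`, `y ∈ B`
is a Dilworth edge, i.e. belongs to a perfect matching of comparable pairs. -/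
def IsCore {α : Type*} (le : α → α → Prop) (A B : Finset α) : Prop :=
  A.card = B.card ∧
    ∀ x ∈ A, ∀ y ∈ B, le x y →
      ∃ f : α → α, Set.BijOn f ↑A ↑B ∧ (∀ a ∈ A, le a (f a)) ∧ f x = y

/-- `A j = A_{s(i)}`: among the antichains presented before `A i`, it is the
`⊑`-least one strictly above `A i`. -/
def IsSuccIdx {α : Type*} (le : α → α → Prop) {n : ℕ} (A : Fin n → Finset α)
    (i j : Fin n) : Prop :=
  j < i ∧ StrictBelow le (A i) (A j) ∧
    ∀ k : Fin n, k < i → StrictBelow le (A i) (A k) → Below le (A j) (A k)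

/-- `A j = A_{p(i)}`: among the antichains presented before `A i`, it is the
`⊑`-greatest one strictly below `A i`. -/
def IsPredIdx {α : Type*} (le : α → α → Prop) {n : ℕ} (A : Fin n → Finset α)
    (i j : Fin n) : Prop :=
  j < i ∧ StrictBelow le (A j) (A i) ∧
    ∀ k : Fin n, k < i → StrictBelow le (A k) (A i) → Below le (A k) (A j)

/-- `(P, A_1, …, A_n)` is a regular poset of width `w`: the `A i` are pairwise
disjoint maximum antichains (each of size `w`, the width of `P`) covering `P`,
linearly ordered by `⊑`; consecutive-at-presentation-time pairs induce cores
(R4); and every comparability with an earlier antichain factors through the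
`⊑`-neighbors at presentation time (R5). -/
def IsRegularPoset {α : Type*} (le : α → α → Prop) (w : ℕ) {n : ℕ}
    (A : Fin n → Finset α) : Prop :=
  (∀ v : α, ∃ i, v ∈ A i) ∧
  (∀ i j : Fin n, i ≠ j → ∀ v ∈ A i, v ∉ A j) ∧
  (∀ i, IsAntichainOn le (A i)) ∧
  (∀ i, (A i).card = w) ∧
  IsWidth le w ∧
  (∀ i j : Fin n, Below le (A i) (A j) ∨ Below le (A j) (A i)) ∧
  (∀ i j : Fin n, IsSuccIdx le A i j → IsCore le (A i) (A j)) ∧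
  (∀ i j : Fin n, IsPredIdx le A i j → IsCore le (A j) (A i)) ∧
  (∀ (i j : Fin n) (x y : α), x ∈ A i → y ∈ A j → le x y → x ≠ y →
    (j < i → ∃ k, IsSuccIdx le A i k ∧ ∃ z ∈ A k, le x z ∧ x ≠ z ∧ le z y) ∧
    (i < j → ∃ k, IsPredIdx le A j k ∧ ∃ z ∈ A k, le x z ∧ le z y ∧ z ≠ y))

/-- `x` is an ascending chain: increasing both in the poset and in color. -/
def IsAscending {α : Type*} (le : α → α → Prop) (g : α → ℕ) {k : ℕ}
    (x : Fin k → α) : Prop :=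
  ∀ i j : Fin k, i < j → (le (x i) (x j) ∧ x i ≠ x j) ∧ g (x i) < g (x j)

/-- `x` is a descending chain: decreasing in the poset, increasing in color. -/
def IsDescending {α : Type*} (le : α → α → Prop) (g : α → ℕ) {k : ℕ}
    (x : Fin k → α) : Prop :=
  ∀ i j : Fin k, i < j → (le (x j) (x i) ∧ x i ≠ x j) ∧ g (x i) < g (x j)

/-- The order of the lexicographic product `P · Q`. -/
def LexLe {α β : Type*} (leP : α → α → Prop) (leQ : β → β → Prop) :
    α × β → α × β → Prop :=
  fun a b => (leP a.1 b.1 ∧ a.1 ≠ b.1) ∨ (a.1 = b.1 ∧ leQ a.2 b.2)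

section UpMatching

variable {α : Type*} {le : α → α → Prop}

def IsUpMatching (le : α → α → Prop) (S T : Finset α) (f : α → α) : Prop :=
  Set.BijOn f ↑S ↑T ∧ ∀ v ∈ S, le v (f v)

theorem IsUpMatching.id [Std.Refl le] (S : Finset α) : IsUpMatching le S S id :=
  ⟨Set.bijOn_id _, fun v _ => refl_of le v⟩

theorem IsUpMatching.comp [IsTrans α le] {S T U : Finset α} {f g : α → α}
    (hg : IsUpMatching le T U g) (hf : IsUpMatching le S T f) :
    IsUpMatching le S U (g ∘ f) :=
  ⟨hg.1.comp hf.1, fun v hv => _root_.trans (hf.2 v hv) (hg.2 _ (hf.1.mapsTo hv))⟩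

theorem IsCore.exists_isUpMatching {A B : Finset α} (h : IsCore le A B) {x y : α}
    (hx : x ∈ A) (hy : y ∈ B) (hxy : le x y) :
    ∃ f, IsUpMatching le A B f ∧ f x = y := by
  obtain ⟨f, hbij, hle, hfx⟩ := h.2 x hx y hy hxy
  exact ⟨f, ⟨hbij, hle⟩, hfx⟩

def compUpTo (M : ℕ → α → α) : ℕ → α → α
  | 0 => id
  | k + 1 => M k ∘ compUpTo M k

section Chain

variable [IsPreorder α le] {S : ℕ → Finset α} {M : ℕ → α → α}

theorem isUpMatching_compUpTo {n : ℕ}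
    (hM : ∀ k < n, IsUpMatching le (S k) (S (k + 1)) (M k)) :
    IsUpMatching le (S 0) (S n) (compUpTo M n) := by
  induction n with
  | zero => exact IsUpMatching.id _
  | succ n ih => exact (hM n n.lt_succ_self).comp (ih fun k hk => hM k (by omega))

theorem le_compUpTo_of_le {n : ℕ} (hM : ∀ k < n, IsUpMatching le (S k) (S (k + 1)) (M k))
    {p : α} (hp : p ∈ S 0) {i : ℕ} (hin : i ≤ n) :
    le (compUpTo M i p) (compUpTo M n p) := by
  induction n, hin using Nat.le_induction with
  | base => exact refl_of le _
  | succ n hin ih =>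
    have hpn := (isUpMatching_compUpTo (n := n) fun k hk => hM k (by omega)).1.mapsTo hp
    exact _root_.trans (ih fun k hk => hM k (by omega)) ((hM n n.lt_succ_self).2 _ hpn)

theorem card_le_of_isUpMatching {m : ℕ} (x y : ℕ → α)
    (hM : ∀ k, k + 1 < m → IsUpMatching le (S k) (S (k + 1)) (M k))
    (hx : ∀ k < m, x k ∈ S k) (hy : ∀ k, k + 1 < m → le (y k) (M k (x k)))
    (hyx : ∀ i j, i < j → j < m → ¬ le (y i) (x j)) :
    m ≤ (S 0).card := by
  have hpull : ∀ k : Fin m, ∃ p ∈ S 0, compUpTo M k p = x k := fun k =>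
    (isUpMatching_compUpTo fun i hi => hM i (by omega)).1.surjOn (hx k k.isLt)
  choose p hpS hpx using hpull
  have hlt : ∀ i j : Fin m, i < j → p i ≠ p j := by
    intro i j hij hp
    have hchain : le (compUpTo M (i + 1) (p i)) (compUpTo M j (p i)) :=
      le_compUpTo_of_le (fun k hk => hM k (by omega)) (hpS i) hij
    have hyi : le (y i) (compUpTo M (i + 1) (p i)) := by
      simpa only [compUpTo, Function.comp_apply, hpx i] using hy i (by omega)
    rw [show compUpTo M j (p i) = x j by rw [hp, hpx j]] at hchain
    exact hyx i j hij j.isLt (_root_.trans hyi hchain)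
  calc m = (Finset.univ : Finset (Fin m)).card := (Finset.card_fin m).symm
    _ ≤ (S 0).card := by
      refine Finset.card_le_card_of_injOn p (fun k _ => hpS k) fun i _ j _ hpij => ?_
      by_contra hne
      rcases lt_or_gt_of_ne hne with h | h
      · exact hlt i j h hpij
      · exact hlt j i h hpij.symm

end Chain

namespace IsRegularPoset

variable {w n : ℕ} {A : Fin n → Finset α}

theorem eq_of_mem_of_mem (hreg : IsRegularPoset le w A) {i j : Fin n} {v : α}
    (hi : v ∈ A i) (hj : v ∈ A j) : i = j := by
  by_contra hij
  exact hreg.2.1 i j hij v hi hj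

theorem eq_of_le (hreg : IsRegularPoset le w A) {i : Fin n} {u v : α} (hu : u ∈ A i)
    (hv : v ∈ A i) (huv : le u v) : u = v := by
  by_contra hne
  exact (hreg.2.2.1 i u hu v hv hne).1 huv

theorem below_of_le [IsPartialOrder α le] (hreg : IsRegularPoset le w A) {a b : Fin n}
    {u v : α} (hu : u ∈ A a) (hv : v ∈ A b) (huv : le u v) : Below le (A a) (A b) := by
  rcases hreg.2.2.2.2.2.1 a b with hab | hba
  · exact hab
  obtain ⟨u', hu', hvu'⟩ := hba v hv
  obtain rfl := hreg.eq_of_le hu hu' (_root_.trans huv hvu')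
  obtain rfl : u = v := antisymm huv hvu'
  obtain rfl := hreg.eq_of_mem_of_mem hu hv
  exact hba

/-- Split the pair through a presentation-time neighbour (R5), match one half by the core
property (R4) and recurse on the other, whose indices were presented earlier. -/
theorem exists_isUpMatching [IsPreorder α le] (hreg : IsRegularPoset le w A) {a b : Fin n}
    (hab : Below le (A a) (A b)) {x y : α} (hx : x ∈ A a) (hy : y ∈ A b) (hxy : le x y) :
    ∃ f, IsUpMatching le (A a) (A b) f ∧ f x = y := by
  have ⟨_, _, _, _, _, _, hsucc, hpred, hfactor⟩ := hreg
  by_cases hab' : a = b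
  · subst hab'
    obtain rfl := hreg.eq_of_le hx hy hxy
    exact ⟨id, IsUpMatching.id _, rfl⟩
  have hxy' : x ≠ y := fun h => hab' (hreg.eq_of_mem_of_mem hx (h ▸ hy))
  have hAab : A a ≠ A b := fun h => hab' (hreg.eq_of_mem_of_mem hx (h ▸ hx))
  have hfac := hfactor a b x y hx hy hxy hxy'
  rcases lt_or_gt_of_ne hab' with hlt | hgt
  · obtain ⟨k, hk, z, hz, hxz, hzy, -⟩ := hfac.2 hlt
    have : (k : ℕ) < b := hk.1
    obtain ⟨f, hf, rfl⟩ := hreg.exists_isUpMatching (hk.2.2 a hlt ⟨hab, hAab⟩) hx hz hxz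
    obtain ⟨g, hg, rfl⟩ := (hpred b k hk).exists_isUpMatching hz hy hzy
    exact ⟨g ∘ f, hg.comp hf, rfl⟩
  · obtain ⟨k, hk, z, hz, hxz, -, hzy⟩ := hfac.1 hgt
    have : (k : ℕ) < a := hk.1
    obtain ⟨f, hf, rfl⟩ := (hsucc a k hk).exists_isUpMatching hx hz hxz
    obtain ⟨g, hg, rfl⟩ := hreg.exists_isUpMatching (hk.2.2 b hgt ⟨hab, hAab⟩) hz hy hzy
    exact ⟨g ∘ f, hg.comp hf, rfl⟩
termination_by max (a : ℕ) b

/-- A matching through `x ↦ y` followed by any up-matching `A b → A c`, which moves `y` up. -/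
theorem exists_isUpMatching_le_apply [IsPartialOrder α le] (hreg : IsRegularPoset le w A)
    {a b c : Fin n} {x y : α} (hx : x ∈ A a) (hy : y ∈ A b) (hxy : le x y)
    (hbc : Below le (A b) (A c)) :
    ∃ f, IsUpMatching le (A a) (A c) f ∧ le y (f x) := by
  obtain ⟨f, hf, rfl⟩ := hreg.exists_isUpMatching (hreg.below_of_le hx hy hxy) hx hy hxy
  obtain ⟨t, ht, hyt⟩ := hbc (f x) hy
  obtain ⟨g, hg, -⟩ := hreg.exists_isUpMatching hbc hy ht hyt
  exact ⟨g ∘ f, hg.comp hf, hg.2 _ hy⟩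

end IsRegularPoset

end UpMatching

theorem stmt_5_general {α : Type} (le : α → α → Prop)
    (hle : IsPartialOrder α le) (w : ℕ) {n : ℕ} (A : Fin n → Finset α)
    (hreg : IsRegularPoset le w A) {m : ℕ}
    (x y : Fin m → α) (hlad : IsLadderIn le x y)
    (hcan : ∀ i j : Fin m, (i : ℕ) + 1 = (j : ℕ) →
      ∀ a b : Fin n, y i ∈ A a → x j ∈ A b → Below le (A a) (A b)) :
    m ≤ w := by
  obtain _ | m := m
  · exact Nat.zero_le w
  obtain ⟨-, -, hrung, hinc⟩ := hlad
  let r : ℕ → Fin (m + 1) := Fin.ofNat (m + 1)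
  have hval : ∀ k < m + 1, (r k : ℕ) = k := fun k hk => by simp [r, Nat.mod_eq_of_lt hk]
  have ⟨hcover, _, _, hcard, _⟩ := hreg
  choose ax hax using fun k : ℕ => hcover (x (r k))
  choose ay hay using fun k : ℕ => hcover (y (r k))
  have hstep : ∀ k : ℕ, ∃ f, k + 1 < m + 1 →
      IsUpMatching le (A (ax k)) (A (ax (k + 1))) f ∧ le (y (r k)) (f (x (r k))) := by
    intro k
    by_cases hk : k + 1 < m + 1
    · have hbelow := hcan (r k) (r (k + 1)) (by rw [hval k (by omega), hval (k + 1) hk])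
        _ _ (hay k) (hax (k + 1))
      obtain ⟨f, hf⟩ := hreg.exists_isUpMatching_le_apply (hax k) (hay k) (hrung _).1 hbelow
      exact ⟨f, fun _ => hf⟩
    · exact ⟨id, fun h => absurd h hk⟩
  choose M hM using hstep
  calc m + 1 ≤ (A (ax 0)).card :=
        card_le_of_isUpMatching (S := fun k => A (ax k)) (M := M) (x ∘ r) (y ∘ r)
          (fun k hk => (hM k hk).1) (fun k _ => hax k) (fun k hk => (hM k hk).2)
          (fun i j hij hj => (hinc _ _ (by rw [Fin.lt_def, hval i (by omega), hval j hj]; exact hij)).1)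
    _ = w := hcard _

/-- A canonical `m`-ladder in a regular poset of width `w`
satisfies `m ≤ w`. -/
theorem stmt_5 {α : Type} [Fintype α] (le : α → α → Prop)
    (hle : IsPartialOrder α le) (w : ℕ) {n : ℕ} (A : Fin n → Finset α)
    (hreg : IsRegularPoset le w A) {m : ℕ}
    (x y : Fin m → α) (hlad : IsLadderIn le x y)
    (hcan : ∀ i j : Fin m, (i : ℕ) + 1 = (j : ℕ) →
      ∀ a b : Fin n, y i ∈ A a → x j ∈ A b → Below le (A a) (A b)) :
    m ≤ w :=
  stmt_5_general le hle w A hreg x y hlad hcan
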